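/- Let 0 ≤ r ≤ n with n = 2m even and let Φ(e_1), …, Φ(e_n) be the 2^m × 2^m complex matrices built from Kronecker products of E, T, U, V with signature factors τ_j (τ_j = i for j ≤ r, else 1). For ε = ±1 let u(ε) = (√2/2)·(1, −εi) ∈ ℂ², and let u(ε_m,…,ε_1) = u(ε_m) ⊗ ⋯ ⊗ u(ε_1) be the associated basis of ℂ^{2^m}. Define Δ⁺ (respectively Δ⁻) as the span of those u(ε_m,…,ε_1) with ε_1·ε_2·⋯·ε_m = 1 (respectively = −1). Then for all indices i, j, the product matrix Φ(e_i)·Φ(e_j) maps Δ⁺ into Δ⁺ and Δ⁻ into Δ⁻. -/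

import Mathlib

/-!
Each `u(ε)` is an eigenvector of `E` and of `T` (eigenvalue `−ε`), while `U` and `V` send `u(ε)`
to a multiple of `u(−ε)`. Since a Kronecker product acts factorwise on pure tensors, `Φ(e_j)`
sends `u(ε_m,…,ε_1)` to a multiple of the basis vector with the single sign `ε_k`
(`j ∈ {2k−1, 2k}`) flipped. So every `Φ(e_j)` exchanges `Δ⁺` and `Δ⁻`, and a product of two of
them preserves both.
-/

open Matrix

noncomputable def Emat : Matrix (Fin 2) (Fin 2) ℂ := 1
noncomputable def Tmat : Matrix (Fin 2) (Fin 2) ℂ := !![0, -Complex.I; Complex.I, 0]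
noncomputable def Umat : Matrix (Fin 2) (Fin 2) ℂ := !![Complex.I, 0; 0, -Complex.I]
noncomputable def Vmat : Matrix (Fin 2) (Fin 2) ℂ := !![0, Complex.I; Complex.I, 0]

/-- The 2×2 factor in position `t` (from the right, 0-based) of the Kronecker
product defining the generator whose distinguished factor `M` (= U or V) sits
in position `k`. -/
noncomputable def cliffordFactor (k : ℕ) (M : Matrix (Fin 2) (Fin 2) ℂ) (t : ℕ) :
    Matrix (Fin 2) (Fin 2) ℂ :=
  if t < k then Tmat else if t = k then M else Emat

/-- The spinor matrix `Φ(e_{j+1})` for signature `(r, 2m − r)`. -/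
noncomputable def Phi (r m : ℕ) (j : Fin (2 * m)) :
    Matrix (Fin m → Fin 2) (Fin m → Fin 2) ℂ :=
  (if (j : ℕ) + 1 ≤ r then Complex.I else 1) •
    Matrix.of fun p q => ∏ t : Fin m,
      cliffordFactor ((j : ℕ) / 2) (if (j : ℕ) % 2 = 0 then Umat else Vmat)
        (t : ℕ) (p t) (q t)

/-- `u(ε) = (√2/2)·(1, −εi) ∈ ℂ²`. -/
noncomputable def uvec (ε : ℂ) : Fin 2 → ℂ := fun i =>
  ((Real.sqrt 2 / 2 : ℝ) : ℂ) * (if i = 0 then 1 else -ε * Complex.I)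

/-- The basis vector `u(ε_m,…,ε_1) = u(ε_m) ⊗ ⋯ ⊗ u(ε_1)` of `ℂ^{2^m}`;
the factor `u(ε_{t+1})` sits in Kronecker position `t`. -/
noncomputable def uTensor {m : ℕ} (ε : Fin m → ℂ) : (Fin m → Fin 2) → ℂ :=
  fun p => ∏ t, uvec (ε t) (p t)

/-- The half-spinor module Δ^{sign}: the span of the `u(ε_m,…,ε_1)` with
`ε_1 ⋯ ε_m = sign` (each `ε_t = ±1`). -/
noncomputable def halfSpinor (m : ℕ) (sign : ℂ) : Submodule ℂ ((Fin m → Fin 2) → ℂ) :=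
  Submodule.span ℂ
    {v | ∃ ε : Fin m → ℂ, (∀ t, ε t = 1 ∨ ε t = -1) ∧ (∏ t, ε t) = sign ∧ v = uTensor ε}

section KroneckerPureTensor

variable {ι n R : Type*} [Fintype ι] [DecidableEq ι] [Fintype n] [CommSemiring R]

theorem of_prod_mulVec_prod_of_mulVec_eq_smul (A : ι → Matrix n n R) (w w' : ι → n → R)
    (c : ι → R) (h : ∀ t, A t *ᵥ w t = c t • w' t) :
    (of fun p q : ι → n => ∏ t, A t (p t) (q t)) *ᵥ (fun q => ∏ t, w t (q t)) =
      (∏ t, c t) • fun p => ∏ t, w' t (p t) := by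
  funext p
  calc ((of fun p q : ι → n => ∏ t, A t (p t) (q t)) *ᵥ fun q => ∏ t, w t (q t)) p
      = ∑ q : ι → n, ∏ t, A t (p t) (q t) * w t (q t) := by
        simp only [mulVec, dotProduct, of_apply, Finset.prod_mul_distrib]
    _ = ∏ t, (A t *ᵥ w t) (p t) := (Fintype.prod_sum fun t x => A t (p t) x * w t x).symm
    _ = ((∏ t, c t) • fun p => ∏ t, w' t (p t)) p := by
        simp only [h, Pi.smul_apply, smul_eq_mul, Finset.prod_mul_distrib]

end KroneckerPureTensor

lemma Emat_mulVec_uvec (ε : ℂ) : Emat *ᵥ uvec ε = uvec ε :=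
  one_mulVec _

lemma Tmat_mulVec_uvec {ε : ℂ} (hε : ε = 1 ∨ ε = -1) : Tmat *ᵥ uvec ε = (-ε) • uvec ε := by
  funext x
  fin_cases x <;> rcases hε with rfl | rfl <;>
    simp [Tmat, mulVec, dotProduct, uvec, Fin.sum_univ_two] <;> ring_nf <;> rw [Complex.I_sq] <;>
    ring

lemma Umat_mulVec_uvec (ε : ℂ) : Umat *ᵥ uvec ε = Complex.I • uvec (-ε) := by
  funext x
  fin_cases x <;> simp [Umat, mulVec, dotProduct, uvec, Fin.sum_univ_two]

lemma Vmat_mulVec_uvec {ε : ℂ} (hε : ε = 1 ∨ ε = -1) : Vmat *ᵥ uvec ε = ε • uvec (-ε) := by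
  funext x
  fin_cases x <;> rcases hε with rfl | rfl <;>
    simp [Vmat, mulVec, dotProduct, uvec, Fin.sum_univ_two] <;> ring_nf <;> rw [Complex.I_sq] <;>
    ring

lemma cliffordFactor_mulVec_uvec {M : Matrix (Fin 2) (Fin 2) ℂ}
    (hM : ∀ ε : ℂ, (ε = 1 ∨ ε = -1) → ∃ c : ℂ, M *ᵥ uvec ε = c • uvec (-ε))
    (k t : ℕ) {ε : ℂ} (hε : ε = 1 ∨ ε = -1) :
    ∃ c : ℂ, cliffordFactor k M t *ᵥ uvec ε = c • uvec (if t = k then -ε else ε) := by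
  unfold cliffordFactor
  split_ifs with hlt heq
  · omega
  · exact ⟨-ε, Tmat_mulVec_uvec hε⟩
  · exact hM ε hε
  · exact ⟨1, by rw [Emat_mulVec_uvec, one_smul]⟩

lemma Phi_mulVec_uTensor (r m : ℕ) (j : Fin (2 * m)) {ε : Fin m → ℂ}
    (hε : ∀ t, ε t = 1 ∨ ε t = -1) :
    ∃ (k : Fin m) (c : ℂ),
      Phi r m j *ᵥ uTensor ε = c • uTensor (Function.update ε k (-ε k)) := by
  have hM : ∀ ε : ℂ, (ε = 1 ∨ ε = -1) → ∃ c : ℂ,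
      (if (j : ℕ) % 2 = 0 then Umat else Vmat) *ᵥ uvec ε = c • uvec (-ε) := fun ε hε => by
    split_ifs
    exacts [⟨_, Umat_mulVec_uvec ε⟩, ⟨_, Vmat_mulVec_uvec hε⟩]
  choose c hc using fun t : Fin m => cliffordFactor_mulVec_uvec hM (j / 2) t (hε t)
  refine ⟨⟨j / 2, by omega⟩, (if (j : ℕ) + 1 ≤ r then Complex.I else 1) * ∏ t, c t, ?_⟩
  unfold uTensor
  rw [Phi, smul_mulVec, of_prod_mulVec_prod_of_mulVec_eq_smul _ _ _ c hc, smul_smul]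
  simp only [Function.update_apply, Fin.ext_iff]
  congr!

lemma Phi_mulVec_mem_halfSpinor_neg (r m : ℕ) (j : Fin (2 * m)) {s : ℂ}
    {v : (Fin m → Fin 2) → ℂ} (hv : v ∈ halfSpinor m s) :
    Phi r m j *ᵥ v ∈ halfSpinor m (-s) := by
  suffices halfSpinor m s ≤ (halfSpinor m (-s)).comap (Phi r m j).mulVecLin from this hv
  refine Submodule.span_le.2 ?_
  rintro _ ⟨ε, hε, rfl, rfl⟩
  obtain ⟨k, c, hc⟩ := Phi_mulVec_uTensor r m j hε
  rw [SetLike.mem_coe, Submodule.mem_comap, mulVecLin_apply, hc]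
  refine Submodule.smul_mem _ _ (Submodule.subset_span ⟨_, ?_, ?_, rfl⟩)
  · refine (Function.forall_update_iff ε fun _ x => x = 1 ∨ x = -1).2 ⟨?_, fun t _ => hε t⟩
    rcases hε k with h | h <;> simp [h]
  · rw [Finset.prod_update_of_mem (Finset.mem_univ k),
      Finset.prod_eq_mul_prod_sdiff_singleton_of_mem (Finset.mem_univ k)]
    ring

theorem Phi_mul_Phi_preserves_half_spinors_general (r m : ℕ)
    (i j : Fin (2 * m)) :
    (∀ v ∈ halfSpinor m 1, (Phi r m i * Phi r m j).mulVec v ∈ halfSpinor m 1) ∧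
    (∀ v ∈ halfSpinor m (-1), (Phi r m i * Phi r m j).mulVec v ∈ halfSpinor m (-1)) := by
  have preserves (s : ℂ) (v) (hv : v ∈ halfSpinor m s) :
      (Phi r m i * Phi r m j) *ᵥ v ∈ halfSpinor m s := by
    rw [← mulVec_mulVec, ← neg_neg s]
    exact Phi_mulVec_mem_halfSpinor_neg r m i (Phi_mulVec_mem_halfSpinor_neg r m j hv)
  exact ⟨preserves 1, preserves (-1)⟩

theorem Phi_mul_Phi_preserves_half_spinors (r m : ℕ) (hr : r ≤ 2 * m)
    (i j : Fin (2 * m)) :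
    (∀ v ∈ halfSpinor m 1, (Phi r m i * Phi r m j).mulVec v ∈ halfSpinor m 1) ∧
    (∀ v ∈ halfSpinor m (-1), (Phi r m i * Phi r m j).mulVec v ∈ halfSpinor m (-1)) :=
  Phi_mul_Phi_preserves_half_spinors_general r m i j
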